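/- arXiv:2106.07695 — 2 statements merged into one kernel-verified Lean document; each statement's English description precedes it below -/
import Mathlib

section
/- Let a, b be real numbers with |a| > |b|, b ≠ 0, and define f(x) = a·x/(x − b). Then the sequence defined by x₀ = a and x_{t+1} = f(x_t) converges to a + b. -/
/-!
The reciprocal `y = 1/x` turns the Möbius map `x ↦ a x / (x - b)` into the affine map
`y ↦ 1/a - (b/a) y`, whose contraction factor `q = -b/a` has `|q| < 1`. Solving the affine
recurrence from `y₀ = 1/a` gives `1/x_t = (1 - q^(t+1)) / (a + b)`, which never vanishes (so the
iteration never divides by zero) and tends to `1/(a + b)`.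
-/

open Filter Topology

section Field

variable {K : Type*} [Field K]

theorem inv_mul_div_sub {a b x : K} (ha : a ≠ 0) (hx : x ≠ 0) :
    (a * x / (x - b))⁻¹ = a⁻¹ - b / a * x⁻¹ := by
  rw [inv_div]
  field_simp

theorem inv_iterate_mul_div_sub {a b : K} (ha : a ≠ 0) (hab : a + b ≠ 0)
    (hq : ∀ n : ℕ, (-b / a) ^ (n + 1) ≠ 1) {x : ℕ → K} (hx0 : x 0 = a)
    (hxs : ∀ t, x (t + 1) = a * x t / (x t - b)) (t : ℕ) :
    (x t)⁻¹ = (1 - (-b / a) ^ (t + 1)) / (a + b) := by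
  induction t with
  | zero =>
    rw [hx0, zero_add, pow_one, eq_div_iff hab]
    field_simp
    ring
  | succ t ih =>
    have hxt : x t ≠ 0 := by
      intro h
      rw [h, inv_zero, eq_comm, div_eq_zero_iff, sub_eq_zero] at ih
      exact ih.elim (fun h1 => hq t h1.symm) hab
    rw [hxs, inv_mul_div_sub ha hxt, ih, pow_succ' _ (t + 1)]
    generalize (-b / a) ^ (t + 1) = p
    field_simp
    ring

end Field

theorem abs_neg_div_lt_one {a b : ℝ} (hab : |b| < |a|) : |-b / a| < 1 := by
  rw [abs_div, abs_neg, div_lt_one (abs_nonneg b |>.trans_lt hab)]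
  exact hab

theorem stmt_1_general (a b : ℝ) (hab : |a| > |b|)
    (x : ℕ → ℝ) (hx0 : x 0 = a)
    (hxs : ∀ t, x (t + 1) = a * x t / (x t - b)) :
    Filter.Tendsto x Filter.atTop (nhds (a + b)) := by
  have ha : a ≠ 0 := abs_pos.1 (abs_nonneg b |>.trans_lt hab)
  have hsum : a + b ≠ 0 := fun h => by
    rw [eq_neg_of_add_eq_zero_left h, abs_neg] at hab
    exact lt_irrefl _ hab
  have hq := abs_neg_div_lt_one hab
  have hq_pow : ∀ n : ℕ, (-b / a) ^ (n + 1) ≠ 1 := fun n h => by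
    have := pow_lt_one₀ (abs_nonneg _) hq n.succ_ne_zero
    rw [← abs_pow, h, abs_one] at this
    exact lt_irrefl _ this
  have hpow : Tendsto (fun t : ℕ => (-b / a) ^ (t + 1)) atTop (𝓝 0) :=
    (tendsto_pow_atTop_nhds_zero_of_abs_lt_one hq).comp (tendsto_add_atTop_nat 1)
  have hinv : Tendsto (fun t => (x t)⁻¹) atTop (𝓝 (a + b)⁻¹) := by
    simp_rw [inv_iterate_mul_div_sub ha hsum hq_pow hx0 hxs, inv_eq_one_div]
    simpa using ((tendsto_const_nhds (x := (1 : ℝ))).sub hpow).div_const (a + b)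
  simpa using hinv.inv₀ (inv_ne_zero hsum)

/-- if `|a| > |b|` and `b ≠ 0`, the iteration `x₀ = a`,
`x_{t+1} = a·x_t/(x_t − b)` converges to `a + b`. -/
theorem stmt_1 (a b : ℝ) (hab : |a| > |b|) (hb : b ≠ 0)
    (x : ℕ → ℝ) (hx0 : x 0 = a)
    (hxs : ∀ t, x (t + 1) = a * x t / (x t - b)) :
    Filter.Tendsto x Filter.atTop (nhds (a + b)) :=
  stmt_1_general a b hab x hx0 hxs
end

section
/- Let a, b be real numbers with a > b > 0, and define g(x) = a²x/(x(a−b) + b²) (the two-step map g = f ∘ f for f(x) = ax/(x−b)). Then for every x in the interval [a, a + 2b], |g(x) − (a+b)| ≤ (b/a)·|x − (a+b)|. -/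
/-! The point `a + b` is fixed by `g`, and `g x - (a + b) = b² (x - (a + b)) / (x (a - b) + b²)`.
Since `x (a - b) + b² = a b + (x - b)(a - b) ≥ a b` for `x ≥ b`, the factor in front of
`x - (a + b)` is at most `b² / (a b) = b / a`. -/

section

variable {K : Type*} [Field K] {a b x : K}

lemma div_sub_fixedPoint_eq (hD : x * (a - b) + b ^ 2 ≠ 0) :
    a ^ 2 * x / (x * (a - b) + b ^ 2) - (a + b)
      = b ^ 2 * (x - (a + b)) / (x * (a - b) + b ^ 2) := by
  field_simp
  ring

variable [LinearOrder K] [IsStrictOrderedRing K]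

lemma mul_le_mul_sub_add_sq (hba : b ≤ a) (hbx : b ≤ x) : a * b ≤ x * (a - b) + b ^ 2 := by
  linear_combination mul_nonneg (sub_nonneg.2 hbx) (sub_nonneg.2 hba)

lemma abs_div_sub_fixedPoint_le (hb : 0 < b) (hba : b ≤ a) (hbx : b ≤ x) :
    |a ^ 2 * x / (x * (a - b) + b ^ 2) - (a + b)| ≤ b / a * |x - (a + b)| := by
  have hab : 0 < a * b := mul_pos (hb.trans_le hba) hb
  have hD := mul_le_mul_sub_add_sq hba hbx
  rw [div_sub_fixedPoint_eq (hab.trans_le hD).ne', abs_div, abs_mul, abs_of_pos (hab.trans_le hD),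
    abs_of_pos (pow_pos hb 2)]
  calc b ^ 2 * |x - (a + b)| / (x * (a - b) + b ^ 2)
      ≤ b ^ 2 * |x - (a + b)| / (a * b) := by gcongr
    _ = b / a * |x - (a + b)| := by field_simp

end

/-- contraction estimate for the two-step map
`g x = a²x/(x(a−b)+b²)` on `[a, a+2b]`, with factor `b/a`. -/
theorem stmt_2 (a b : ℝ) (hab : a > b) (hb : b > 0) :
    ∀ x ∈ Set.Icc a (a + 2 * b),
      |a ^ 2 * x / (x * (a - b) + b ^ 2) - (a + b)| ≤ (b / a) * |x - (a + b)| :=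
  fun _ hx ↦ abs_div_sub_fixedPoint_le hb hab.le (hab.le.trans hx.1)
end
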